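/- Let p be an odd prime, d an integer with p ∤ d, and z an integer with z² ≡ d (mod p). Let α ∈ ℤ_p be the square root of d with α ≡ z (mod p), and let a_n ≡ α (mod p^{n+1}) be its truncations. Then D_{n+1}(d,z) is a p-adic unit and a_n ≡ N_{n+1}(d,z)/D_{n+1}(d,z) (mod p^{n+1}) for all n ≥ 0, i.e., Q_{n+1}(d,z) agrees with α modulo p^{n+1} in ℤ_p. -/

import Mathlib

/-- Rédei polynomial `N_n(d,z)` over the integers. -/
def redeiN (d z : ℤ) (n : ℕ) : ℤ :=
  ∑ i ∈ Finset.range (n / 2 + 1), (n.choose (2 * i) : ℤ) * d ^ i * z ^ (n - 2 * i)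

/-- Rédei polynomial `D_n(d,z)` over the integers. -/
def redeiD (d z : ℤ) (n : ℕ) : ℤ :=
  ∑ i ∈ Finset.range (n / 2 + 1), (n.choose (2 * i + 1) : ℤ) * d ^ i * z ^ (n - 2 * i - 1)

/-!
In any commutative ring, a square root `x` of `d` satisfies
`(z ± x)ⁿ = N_n(d,z) ± D_n(d,z) x`. Taking `x = α`, the congruence `α ≡ z (mod p)` gives
`N_n - D_n α = (z - α)ⁿ ≡ 0 (mod pⁿ)`, which together with `a_n ≡ α` is the claimed congruence.
Taking `x = z` in `ℤ/p`, where `z² = d`, gives `2 D_n z = (2z)ⁿ ≠ 0`, so `p ∤ D_n` and `D_n` is a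
`p`-adic unit.
-/

open Finset

theorem Finset.sum_range_two_mul {M : Type*} [AddCommMonoid M] (f : ℕ → M) (m : ℕ) :
    ∑ k ∈ range (2 * m), f k = ∑ i ∈ range m, f (2 * i) + ∑ i ∈ range m, f (2 * i + 1) := by
  induction m with
  | zero => simp
  | succ m ih =>
    rw [mul_add, mul_one, show 2 * m + 2 = 2 * m + 1 + 1 from rfl, sum_range_succ,
      sum_range_succ, ih, sum_range_succ, sum_range_succ]
    abel

section Redei

variable {R : Type*} [CommRing R] {d : ℤ} {x : R}

theorem add_pow_eq_redeiN_add_redeiD_mul (hx : x ^ 2 = d) (z : ℤ) (n : ℕ) :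
    ((z : R) + x) ^ n = redeiN d z n + redeiD d z n * x := by
  have hrange : range (n + 1) ⊆ range (2 * (n / 2 + 1)) := range_subset_range.2 (by omega)
  rw [add_comm, add_pow, sum_subset hrange fun k hk hk' => by
      rw [Nat.choose_eq_zero_of_lt (by simp only [mem_range] at hk hk'; omega)]; simp,
    sum_range_two_mul]
  congr 1
  · push_cast [redeiN]
    refine sum_congr rfl fun i _ => ?_
    rw [pow_mul, hx]
    ring
  · push_cast [redeiD, sum_mul]
    refine sum_congr rfl fun i _ => ?_
    rw [pow_succ, pow_mul, hx, ← Nat.sub_sub]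
    ring

theorem sub_pow_eq_redeiN_sub_redeiD_mul (hx : x ^ 2 = d) (z : ℤ) (n : ℕ) :
    ((z : R) - x) ^ n = redeiN d z n - redeiD d z n * x := by
  rw [sub_eq_add_neg, add_pow_eq_redeiN_add_redeiD_mul (by rw [neg_sq, hx]), mul_neg,
    sub_eq_add_neg]

theorem pow_dvd_redeiN_sub_redeiD_mul (hx : x ^ 2 = d) {z : ℤ} {q : R} (hq : q ∣ z - x)
    (n : ℕ) : q ^ n ∣ redeiN d z n - redeiD d z n * x :=
  sub_pow_eq_redeiN_sub_redeiD_mul hx z n ▸ pow_dvd_pow_of_dvd hq n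

theorem redeiD_ne_zero [IsDomain R] {z : ℤ} (hzd : (z : R) ^ 2 = d) (h2 : (2 : R) ≠ 0)
    (hz : (z : R) ≠ 0) {n : ℕ} (hn : n ≠ 0) : (redeiD d z n : R) ≠ 0 := by
  have hD : 2 * (redeiD d z n : R) * z = (2 * z) ^ n := by
    have hadd := add_pow_eq_redeiN_add_redeiD_mul hzd z n
    have hsub := sub_pow_eq_redeiN_sub_redeiD_mul hzd z n
    rw [sub_self, zero_pow hn] at hsub
    linear_combination hsub - hadd
  intro h
  rw [h, mul_zero, zero_mul] at hD
  exact pow_ne_zero n (mul_ne_zero h2 hz) hD.symm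

end Redei

theorem PadicInt.isUnit_intCast_iff {p : ℕ} [Fact p.Prime] {k : ℤ} :
    IsUnit (k : ℤ_[p]) ↔ ¬ (p : ℤ) ∣ k := by
  rw [← not_iff_not, not_not, not_isUnit_iff, norm_intCast_lt_one_iff]

theorem redei_padic_truncation (p : ℕ) [Fact p.Prime] (hodd : Odd p) (d z : ℤ)
    (hd : ¬ (p : ℤ) ∣ d) (hz : z ^ 2 ≡ d [ZMOD (p : ℤ)])
    (α : ℤ_[p]) (hα : α ^ 2 = (d : ℤ_[p])) (hαz : (p : ℤ_[p]) ∣ (α - (z : ℤ_[p])))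
    (a : ℕ → ℤ) (htrunc : ∀ n : ℕ, ((p : ℤ_[p]) ^ (n + 1)) ∣ ((a n : ℤ_[p]) - α)) :
    ∀ n : ℕ, IsUnit ((redeiD d z (n + 1) : ℤ_[p])) ∧
      ((p : ℤ_[p]) ^ (n + 1)) ∣
        ((a n : ℤ_[p]) * (redeiD d z (n + 1) : ℤ_[p]) - (redeiN d z (n + 1) : ℤ_[p])) := by
  intro n
  have hzd : (z : ZMod p) ^ 2 = d := by exact_mod_cast (ZMod.intCast_eq_intCast_iff _ _ _).mpr hz
  have h2 : (2 : ZMod p) ≠ 0 := Ring.two_ne_zero <| by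
    rw [ZMod.ringChar_zmod_n]; rintro rfl; exact absurd hodd (by decide)
  have hz0 : (z : ZMod p) ≠ 0 := fun h => hd <| (ZMod.intCast_zmod_eq_zero_iff_dvd d p).mp <| by
    rw [← hzd, h, zero_pow two_ne_zero]
  have hD : ¬ (p : ℤ) ∣ redeiD d z (n + 1) := by
    rw [← ZMod.intCast_zmod_eq_zero_iff_dvd]
    exact redeiD_ne_zero hzd h2 hz0 n.succ_ne_zero
  refine ⟨PadicInt.isUnit_intCast_iff.mpr hD, ?_⟩
  have hND := pow_dvd_redeiN_sub_redeiD_mul hα (dvd_sub_comm.mp hαz) (n + 1)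
  rw [show (a n : ℤ_[p]) * redeiD d z (n + 1) - redeiN d z (n + 1) =
      (a n - α) * redeiD d z (n + 1) - (redeiN d z (n + 1) - redeiD d z (n + 1) * α) by ring]
  exact ((htrunc n).mul_right _).sub hND
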